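/- arXiv:1204.2297 — 3 statements merged into one kernel-verified Lean document; each statement's English description precedes it below -/
import Mathlib

section
/- Let φ : ℝ^m → ℝ^n be an injective affine map, φ(t) = At + b where A is an n×m real matrix with ker A = {0} and b ∈ ℝ^n. Then for every function f ∈ PW(ℝ^n) the superposition f ∘ φ belongs to PW(ℝ^m). -/
open MeasureTheory Complex
open scoped InnerProductSpace

/-- `PW n f` : the Paley–Wiener class, i.e. `f` has the form
`f t = ∫_B g(u) e^{i⟨u,t⟩} du` for some ball `B ⊆ ℝⁿ` and some `g ∈ L²(ℝⁿ)`. -/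
def PW (n : ℕ) (f : EuclideanSpace ℝ (Fin n) → ℂ) : Prop :=
  ∃ (c : EuclideanSpace ℝ (Fin n)) (r : ℝ) (g : EuclideanSpace ℝ (Fin n) → ℂ),
    MemLp g 2 volume ∧
    ∀ t, f t = ∫ u in Metric.ball c r, g u * Complex.exp (Complex.I * (⟪u, t⟫_ℝ : ℝ))

open scoped ENNReal NNReal

theorem aux1 {m n : ℕ} (A : Matrix (Fin n) (Fin m) ℝ)
    (hA : ∀ x : Fin m → ℝ, A.mulVec x = 0 → x = 0) :
    ∃ (k : ℕ) (eL : EuclideanSpace ℝ (Fin n) ≃L[ℝ] (EuclideanSpace ℝ (Fin m) × EuclideanSpace ℝ (Fin k))),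
      ∀ (u : EuclideanSpace ℝ (Fin n)) (t : EuclideanSpace ℝ (Fin m)),
        ⟪u, (WithLp.toLp 2 (A.mulVec t) : EuclideanSpace ℝ (Fin n))⟫_ℝ = ⟪(eL u).1, t⟫_ℝ := by
  classical
  set L : EuclideanSpace ℝ (Fin n) →ₗ[ℝ] EuclideanSpace ℝ (Fin m) :=
    Matrix.toEuclideanLin A.transpose with hL
  have hinner : ∀ (u : EuclideanSpace ℝ (Fin n)) (t : EuclideanSpace ℝ (Fin m)),
      ⟪u, (WithLp.toLp 2 (A.mulVec t) : EuclideanSpace ℝ (Fin n))⟫_ℝ = ⟪L u, t⟫_ℝ := by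
    intro u t
    have hLu : (L u).ofLp = A.transpose.mulVec u.ofLp := rfl
    simp only [PiLp.inner_apply, RCLike.inner_apply, conj_trivial, hLu, WithLp.ofLp_toLp]
    simp only [Matrix.mulVec, dotProduct, Matrix.transpose_apply, Finset.sum_mul,
      Finset.mul_sum]
    rw [Finset.sum_comm]
    exact Finset.sum_congr rfl fun j _ => Finset.sum_congr rfl fun i _ => by ring
  -- L is surjective
  have hsurj : Function.Surjective L := by
    have horth : (LinearMap.range L)ᗮ = ⊥ := by
      rw [Submodule.eq_bot_iff]
      intro v hv
      have h0 : ∀ u : EuclideanSpace ℝ (Fin n), ⟪u, (WithLp.toLp 2 (A.mulVec v) : EuclideanSpace ℝ (Fin n))⟫_ℝ = 0 := by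
        intro u
        rw [hinner]
        exact (Submodule.mem_orthogonal (LinearMap.range L) v).1 hv _ ⟨u, rfl⟩
      have hAv : (WithLp.toLp 2 (A.mulVec v) : EuclideanSpace ℝ (Fin n)) = 0 := by
        have := h0 (WithLp.toLp 2 (A.mulVec v) : EuclideanSpace ℝ (Fin n))
        rwa [inner_self_eq_zero] at this
      have : A.mulVec v = 0 := congrArg WithLp.ofLp hAv
      have := hA v this
      ext i; exact congrFun this i
    have : LinearMap.range L = ⊤ := by
      rwa [Submodule.orthogonal_eq_bot_iff] at horth
    rw [← LinearMap.range_eq_top]; exact this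
  set K : Submodule ℝ (EuclideanSpace ℝ (Fin n)) := LinearMap.ker L with hK
  set k : ℕ := Module.finrank ℝ K with hk
  let q : K ≃ₗ[ℝ] EuclideanSpace ℝ (Fin k) :=
    LinearEquiv.ofFinrankEq _ _ (by simp [finrank_euclideanSpace_fin, hk])
  let P := Submodule.orthogonalProjection K
  let Ltot : EuclideanSpace ℝ (Fin n) →ₗ[ℝ] EuclideanSpace ℝ (Fin m) × EuclideanSpace ℝ (Fin k) :=
    LinearMap.prod L (q.toLinearMap ∘ₗ P.toLinearMap)
  have hinj : Function.Injective Ltot := by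
    rw [← LinearMap.ker_eq_bot, Submodule.eq_bot_iff]
    intro u hu
    have h1 : L u = 0 := congrArg Prod.fst hu
    have h2 : q (P u) = 0 := congrArg Prod.snd hu
    have huK : u ∈ K := h1
    have hPu : P u = ⟨u, huK⟩ := by
      have := Submodule.orthogonalProjection_mem_subspace_eq_self (⟨u, huK⟩ : K)
      simpa [P] using this
    rw [hPu] at h2
    have : (⟨u, huK⟩ : K) = 0 := q.map_eq_zero_iff.1 h2
    simpa using congrArg Subtype.val this
  have hdim : Module.finrank ℝ (EuclideanSpace ℝ (Fin n))
      = Module.finrank ℝ (EuclideanSpace ℝ (Fin m) × EuclideanSpace ℝ (Fin k)) := by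
    have hrn := LinearMap.finrank_range_add_finrank_ker L
    have hrange : LinearMap.range L = ⊤ := LinearMap.range_eq_top.2 hsurj
    rw [hrange, finrank_top] at hrn
    rw [Module.finrank_prod, ← hrn, finrank_euclideanSpace_fin, ← hk]
    simp [finrank_euclideanSpace_fin]
  let ee : EuclideanSpace ℝ (Fin n) ≃ₗ[ℝ] EuclideanSpace ℝ (Fin m) × EuclideanSpace ℝ (Fin k) :=
    LinearMap.linearEquivOfInjective Ltot hinj hdim
  refine ⟨k, ee.toContinuousLinearEquiv, ?_⟩
  intro u t
  rw [hinner]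
  have he : (ee.toContinuousLinearEquiv u) = Ltot u := rfl
  rw [he]
  rfl

set_option maxHeartbeats 1000000 in
/-- If `φ : ℝᵐ → ℝⁿ` is an injective affine map `φ t = A t + b` (with `ker A = {0}`),
then `f ∘ φ ∈ PW(ℝᵐ)` for every `f ∈ PW(ℝⁿ)`. -/
theorem pw_comp_of_injective_affine {m n : ℕ}
    (A : Matrix (Fin n) (Fin m) ℝ) (b : EuclideanSpace ℝ (Fin n))
    (hA : ∀ x : Fin m → ℝ, A.mulVec x = 0 → x = 0)
    (φ : EuclideanSpace ℝ (Fin m) → EuclideanSpace ℝ (Fin n))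
    (hφ : ∀ t : EuclideanSpace ℝ (Fin m), ∀ i : Fin n,
      φ t i = A.mulVec (fun k => t k) i + b i)
    (f : EuclideanSpace ℝ (Fin n) → ℂ) (hf : PW n f) :
    PW m (f ∘ φ) := by
  classical
  obtain ⟨c, r, g₀, hg₀, hf₀⟩ := hf
  obtain ⟨k, eL, heL⟩ := aux1 A hA
  set g : EuclideanSpace ℝ (Fin n) → ℂ := hg₀.1.mk g₀ with hgdef
  have hgsm : StronglyMeasurable g := hg₀.1.stronglyMeasurable_mk
  have hgae : g₀ =ᵐ[volume] g := hg₀.1.ae_eq_mk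
  have hg : MemLp g 2 volume := hg₀.ae_eq hgae
  have hfeq : ∀ t, f t = ∫ u in Metric.ball c r,
      g u * Complex.exp (Complex.I * (⟪u, t⟫_ℝ : ℝ)) := by
    intro t
    rw [hf₀ t]
    refine integral_congr_ae ?_
    filter_upwards [ae_restrict_of_ae hgae] with u hu
    rw [hu]
  set G : EuclideanSpace ℝ (Fin n) → ℂ :=
    (Metric.ball c r).indicator (fun u => g u * Complex.exp (Complex.I * (⟪u, b⟫_ℝ : ℝ))) with hGdef
  have hexpcont : ∀ (E : Type) [NormedAddCommGroup E] , True := fun _ _ => trivial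
  have hGsm : StronglyMeasurable G := by
    refine StronglyMeasurable.indicator ?_ Metric.isOpen_ball.measurableSet
    refine hgsm.mul ?_
    refine Continuous.stronglyMeasurable ?_
    exact Complex.continuous_exp.comp (continuous_const.mul
      (Complex.continuous_ofReal.comp (continuous_id.inner continuous_const)))
  have hGnorm : ∀ u, ‖G u‖ ≤ ‖g u‖ := by
    intro u
    rw [hGdef]
    by_cases hu : u ∈ Metric.ball c r
    · rw [Set.indicator_of_mem hu, norm_mul, mul_comm Complex.I,
        Complex.norm_exp_ofReal_mul_I, mul_one]
    · rw [Set.indicator_of_notMem hu, norm_zero]; positivity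
  have hGmem : MemLp G 2 volume :=
    hg.of_le hGsm.aestronglyMeasurable (Filter.Eventually.of_forall hGnorm)
  have hGint : Integrable G volume := by
    rw [hGdef, integrable_indicator_iff Metric.isOpen_ball.measurableSet]
    have h1 : Integrable g (volume.restrict (Metric.ball c r)) := by
      haveI : IsFiniteMeasure (volume.restrict (Metric.ball c r)) :=
        ⟨by simpa [Measure.restrict_apply] using measure_ball_lt_top⟩
      exact memLp_one_iff_integrable.1 ((hg.restrict _).mono_exponent (by norm_num))
    unfold IntegrableOn
    have := Integrable.bdd_mul (f := fun u : EuclideanSpace ℝ (Fin n) =>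
        Complex.exp (Complex.I * (⟪u, b⟫_ℝ : ℝ))) h1
      (Continuous.aestronglyMeasurable (Complex.continuous_exp.comp (continuous_const.mul
        (Complex.continuous_ofReal.comp (continuous_id.inner continuous_const)))))
      (c := 1) (Filter.Eventually.of_forall fun u => by
        simpa [mul_comm Complex.I] using
          le_of_eq (Complex.norm_exp_ofReal_mul_I (⟪u, b⟫_ℝ)))
    refine this.congr ?_
    filter_upwards with u using by ring
  have hGzero : ∀ u, G u ≠ 0 → u ∈ Metric.ball c r := by
    intro u hu
    by_contra h
    exact hu (by rw [hGdef, Set.indicator_of_notMem h])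
  set eC : ℝ := ‖(eL : EuclideanSpace ℝ (Fin n) →L[ℝ]
      EuclideanSpace ℝ (Fin m) × EuclideanSpace ℝ (Fin k))‖ with heC
  set R : ℝ := eC * (‖c‖ + |r|) + 1 with hRdef
  have hsupp : ∀ p : EuclideanSpace ℝ (Fin m) × EuclideanSpace ℝ (Fin k),
      G (eL.symm p) ≠ 0 → ‖p.1‖ < R ∧ ‖p.2‖ < R := by
    intro p hp
    have hu := hGzero _ hp
    have hnorm : ‖(eL.symm p : EuclideanSpace ℝ (Fin n))‖ ≤ ‖c‖ + |r| := by
      have h1 : ‖eL.symm p - c‖ < r := by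
        rw [← dist_eq_norm]; exact Metric.mem_ball.1 hu
      have := norm_sub_norm_le (eL.symm p) c
      have h2 : ‖eL.symm p‖ ≤ ‖c‖ + ‖eL.symm p - c‖ := by
        have := norm_le_norm_add_norm_sub' (eL.symm p) c
        linarith [norm_add_le c (eL.symm p - c)]
      nlinarith [abs_nonneg r, le_abs_self r]
    have hEp : eL (eL.symm p) = p := eL.apply_symm_apply p
    have hle : ‖eL (eL.symm p)‖ ≤ eC * (‖c‖ + |r|) := by
      refine le_trans ((eL : EuclideanSpace ℝ (Fin n) →L[ℝ]
        EuclideanSpace ℝ (Fin m) × EuclideanSpace ℝ (Fin k)).le_opNorm _) ?_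
      exact mul_le_mul_of_nonneg_left hnorm (norm_nonneg _)
    rw [hEp] at hle
    constructor
    · calc ‖p.1‖ ≤ ‖p‖ := norm_fst_le p
        _ ≤ eC * (‖c‖ + |r|) := hle
        _ < R := by rw [hRdef]; linarith
    · calc ‖p.2‖ ≤ ‖p‖ := norm_snd_le p
        _ ≤ eC * (‖c‖ + |r|) := hle
        _ < R := by rw [hRdef]; linarith
  -- measure theory setup
  set μ₀ : Measure (EuclideanSpace ℝ (Fin n)) := Measure.map (⇑eL.symm)
    (volume : Measure (EuclideanSpace ℝ (Fin m) × EuclideanSpace ℝ (Fin k))) with hμ₀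
  haveI hprodHaar : (volume : Measure (EuclideanSpace ℝ (Fin m) ×
      EuclideanSpace ℝ (Fin k))).IsAddHaarMeasure := by
    rw [Measure.volume_eq_prod]
    exact Measure.prod.instIsAddHaarMeasure volume volume
  haveI : μ₀.IsAddHaarMeasure := eL.symm.isAddHaarMeasure_map volume
  set Cv : ℝ≥0 := Measure.addHaarScalarFactor (volume : Measure (EuclideanSpace ℝ (Fin n))) μ₀
    with hCvdef
  have hvol : (volume : Measure (EuclideanSpace ℝ (Fin n))) = (Cv : ℝ≥0∞) • μ₀ := by
    rw [← ENNReal.smul_def]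
    exact Measure.isAddLeftInvariant_eq_smul _ _
  have hCvpos : 0 < Cv := Measure.addHaarScalarFactor_pos_of_isAddHaarMeasure _ _
  have hmsymm : Measurable (⇑eL.symm) := eL.symm.continuous.measurable
  have key : ∀ F : EuclideanSpace ℝ (Fin n) → ℂ, StronglyMeasurable F →
      (∫ u, F u) = (Cv : ℝ≥0∞).toReal • ∫ p, F (eL.symm p) ∂volume := by
    intro F hF
    calc (∫ u, F u) = ∫ u, F u ∂((Cv : ℝ≥0∞) • μ₀) := by rw [← hvol]
      _ = (Cv : ℝ≥0∞).toReal • ∫ u, F u ∂μ₀ := integral_smul_measure F _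
      _ = (Cv : ℝ≥0∞).toReal • ∫ p, F (eL.symm p) ∂volume := by
          rw [hμ₀, integral_map hmsymm.aemeasurable hF.aestronglyMeasurable]
  have lkey : ∀ F : EuclideanSpace ℝ (Fin n) → ℝ≥0∞, Measurable F →
      (∫⁻ u, F u) = (Cv : ℝ≥0∞) * ∫⁻ p, F (eL.symm p) ∂volume := by
    intro F hF
    calc (∫⁻ u, F u) = ∫⁻ u, F u ∂((Cv : ℝ≥0∞) • μ₀) := by rw [← hvol]
      _ = (Cv : ℝ≥0∞) * ∫⁻ u, F u ∂μ₀ := lintegral_smul_measure _ _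
      _ = (Cv : ℝ≥0∞) * ∫⁻ p, F (eL.symm p) ∂volume := by rw [hμ₀, lintegral_map hF hmsymm]
  -- the new density
  set h : EuclideanSpace ℝ (Fin m) → ℂ :=
    fun v => (Cv : ℝ≥0∞).toReal • ∫ w, G (eL.symm (v, w)) with hhdef
  have hG1 : Integrable (fun p => G (eL.symm p)) volume := by
    have h1 : Integrable G ((Cv : ℝ≥0∞) • μ₀) := hvol ▸ hGint
    have h2 : Integrable G μ₀ := by
      rwa [integrable_smul_measure (by simpa using hCvpos.ne') (by simp)] at h1
    exact (integrable_map_measure hGsm.aestronglyMeasurable hmsymm.aemeasurable).1 h2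
  -- main identity
  have hmain : ∀ t, f (φ t) = ∫ v in Metric.ball (0 : EuclideanSpace ℝ (Fin m)) R,
      h v * Complex.exp (Complex.I * (⟪v, t⟫_ℝ : ℝ)) := by
    intro t
    have hφt : ∀ u, (⟪u, φ t⟫_ℝ) = ⟪(eL u).1, t⟫_ℝ + ⟪u, b⟫_ℝ := by
      intro u
      have h1 : φ t = (show EuclideanSpace ℝ (Fin n) from WithLp.toLp 2 (A.mulVec (fun j => t j))) + b := by
        ext i; simpa using hφ t i
      rw [h1, inner_add_right]
      exact congrArg (· + ⟪u, b⟫_ℝ) (heL u t)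
    have hexpc : Continuous fun p : EuclideanSpace ℝ (Fin m) × EuclideanSpace ℝ (Fin k) =>
        Complex.exp (Complex.I * (⟪p.1, t⟫_ℝ : ℝ)) :=
      Complex.continuous_exp.comp (continuous_const.mul
        (Complex.continuous_ofReal.comp (continuous_fst.inner continuous_const)))
    have hFt : Integrable (fun p : EuclideanSpace ℝ (Fin m) × EuclideanSpace ℝ (Fin k) =>
        G (eL.symm p) * Complex.exp (Complex.I * (⟪p.1, t⟫_ℝ : ℝ))) volume := by
      have := Integrable.bdd_mul (f := fun p : EuclideanSpace ℝ (Fin m) ×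
          EuclideanSpace ℝ (Fin k) => Complex.exp (Complex.I * (⟪p.1, t⟫_ℝ : ℝ))) hG1
        hexpc.aestronglyMeasurable
        (c := 1) (Filter.Eventually.of_forall fun p => by
          simpa [mul_comm Complex.I] using le_of_eq (Complex.norm_exp_ofReal_mul_I (⟪p.1, t⟫_ℝ)))
      refine this.congr ?_
      filter_upwards with p using by ring
    calc f (φ t) = ∫ u in Metric.ball c r, g u * Complex.exp (Complex.I * (⟪u, φ t⟫_ℝ : ℝ)) :=
        hfeq _
      _ = ∫ u in Metric.ball c r, (g u * Complex.exp (Complex.I * (⟪u, b⟫_ℝ : ℝ))) *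
          Complex.exp (Complex.I * (⟪(eL u).1, t⟫_ℝ : ℝ)) := by
          refine setIntegral_congr_fun Metric.isOpen_ball.measurableSet (fun u _ => ?_)
          rw [hφt u]
          push_cast
          rw [mul_add, Complex.exp_add]
          ring
      _ = ∫ u, G u * Complex.exp (Complex.I * (⟪(eL u).1, t⟫_ℝ : ℝ)) := by
          rw [← integral_indicator Metric.isOpen_ball.measurableSet]
          congr 1
          funext u
          by_cases hu : u ∈ Metric.ball c r
          · rw [hGdef]; simp only [Set.indicator_of_mem hu]
          · rw [hGdef]; simp only [Set.indicator_of_notMem hu, zero_mul]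
      _ = (Cv : ℝ≥0∞).toReal • ∫ p, G (eL.symm p) *
          Complex.exp (Complex.I * (⟪(eL (eL.symm p)).1, t⟫_ℝ : ℝ)) ∂volume := by
          refine key _ ?_
          refine hGsm.mul ?_
          exact Continuous.stronglyMeasurable (Complex.continuous_exp.comp (continuous_const.mul
            (Complex.continuous_ofReal.comp
              ((continuous_fst.comp eL.continuous).inner continuous_const))))
      _ = (Cv : ℝ≥0∞).toReal • ∫ p : EuclideanSpace ℝ (Fin m) × EuclideanSpace ℝ (Fin k),
          G (eL.symm p) * Complex.exp (Complex.I * (⟪p.1, t⟫_ℝ : ℝ)) ∂volume := by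
          simp only [ContinuousLinearEquiv.apply_symm_apply]
      _ = (Cv : ℝ≥0∞).toReal • ∫ v, ∫ w, G (eL.symm (v, w)) *
          Complex.exp (Complex.I * (⟪v, t⟫_ℝ : ℝ)) := by
          congr 1
          rw [Measure.volume_eq_prod] at hFt ⊢
          exact integral_prod _ hFt
      _ = ∫ v, h v * Complex.exp (Complex.I * (⟪v, t⟫_ℝ : ℝ)) := by
          rw [← integral_smul]
          congr 1
          funext v
          rw [integral_mul_const, hhdef, smul_mul_assoc]
      _ = ∫ v in Metric.ball (0 : EuclideanSpace ℝ (Fin m)) R,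
          h v * Complex.exp (Complex.I * (⟪v, t⟫_ℝ : ℝ)) := by
          refine (setIntegral_eq_integral_of_forall_compl_eq_zero (fun v hv => ?_)).symm
          have hz : (fun w => G (eL.symm (v, w))) = fun _ => (0 : ℂ) := by
            funext w
            by_contra hw
            exact hv (Metric.mem_ball.2 (by
              simpa [dist_eq_norm] using (hsupp (v, w) hw).1))
          have : h v = 0 := by rw [hhdef]; simp only [hz, integral_zero, smul_zero]
          rw [this, zero_mul]
  -- strong measurability of h
  have hhsm : StronglyMeasurable h := by
    have h1 : StronglyMeasurable (fun p : EuclideanSpace ℝ (Fin m) × EuclideanSpace ℝ (Fin k) =>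
        G (eL.symm p)) := hGsm.comp_measurable hmsymm
    have h2 : StronglyMeasurable (fun v : EuclideanSpace ℝ (Fin m) =>
        ∫ w, G (eL.symm (v, w)) ∂(volume : Measure (EuclideanSpace ℝ (Fin k)))) :=
      h1.integral_prod_right'
    exact h2.const_smul ((Cv : ℝ≥0∞).toReal)
  -- finiteness of the L² norm of G
  have hGsqm : Measurable fun u : EuclideanSpace ℝ (Fin n) => (‖G u‖₊ : ℝ≥0∞) ^ (2:ℝ) :=
    hGsm.measurable.nnnorm.coe_nnreal_ennreal.pow_const _
  have hGsq_fin : (∫⁻ u, (‖G u‖₊ : ℝ≥0∞) ^ (2:ℝ)) < ⊤ := by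
    have h2 := hGmem.2
    rw [eLpNorm_eq_eLpNorm' (by norm_num) (by norm_num)] at h2
    have h3 := lintegral_rpow_enorm_lt_top_of_eLpNorm'_lt_top
      (by norm_num : (0:ℝ) < (2 : ℝ≥0∞).toReal) h2
    simpa [enorm_eq_nnnorm] using h3
  have hX_fin : (∫⁻ p : EuclideanSpace ℝ (Fin m) × EuclideanSpace ℝ (Fin k),
      (‖G (eL.symm p)‖₊ : ℝ≥0∞) ^ (2:ℝ)) ≠ ⊤ := by
    intro htop
    have hk2 := lkey (fun u => (‖G u‖₊ : ℝ≥0∞) ^ (2:ℝ)) hGsqm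
    rw [hk2, htop, ENNReal.mul_top (by exact_mod_cast hCvpos.ne')] at hGsq_fin
    exact absurd hGsq_fin (lt_irrefl _)
  -- pointwise Cauchy–Schwarz bound
  set D : ℝ≥0∞ := volume (Metric.ball (0 : EuclideanSpace ℝ (Fin k)) R) with hD
  have hDne : D ≠ ⊤ := measure_ball_lt_top.ne
  have hpt : ∀ v : EuclideanSpace ℝ (Fin m), (‖h v‖₊ : ℝ≥0∞) ≤
      (Cv : ℝ≥0∞) * D ^ (1/2:ℝ) *
        (∫⁻ w, (‖G (eL.symm (v, w))‖₊ : ℝ≥0∞) ^ (2:ℝ)) ^ (1/2:ℝ) := by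
    intro v
    have hnnC : (‖((Cv : ℝ≥0∞)).toReal‖₊ : ℝ≥0∞) = (Cv : ℝ≥0∞) := by
      rw [ENNReal.coe_toReal]
      norm_cast
      ext
      simp [Real.norm_of_nonneg]
    have h0 : (‖h v‖₊ : ℝ≥0∞) = (Cv : ℝ≥0∞) * ‖∫ w, G (eL.symm (v, w))‖₊ := by
      rw [hhdef]
      simp only [nnnorm_smul, ENNReal.coe_mul, hnnC]
    have h1 : (‖∫ w, G (eL.symm (v, w))‖₊ : ℝ≥0∞) ≤
        ∫⁻ w, (‖G (eL.symm (v, w))‖₊ : ℝ≥0∞) :=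
      enorm_integral_le_lintegral_enorm _
    have hmeasv : Measurable fun w : EuclideanSpace ℝ (Fin k) =>
        (‖G (eL.symm (v, w))‖₊ : ℝ≥0∞) :=
      (hGsm.measurable.comp (hmsymm.comp measurable_prodMk_left)).nnnorm.coe_nnreal_ennreal
    have hCS : (∫⁻ w, (‖G (eL.symm (v, w))‖₊ : ℝ≥0∞)) ≤
        (∫⁻ w, (‖G (eL.symm (v, w))‖₊ : ℝ≥0∞) ^ (2:ℝ)) ^ (1/2:ℝ) * D ^ (1/2:ℝ) := by
      set FF : EuclideanSpace ℝ (Fin k) → ℝ≥0∞ :=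
        fun w => (‖G (eL.symm (v, w))‖₊ : ℝ≥0∞) with hFF
      set s : Set (EuclideanSpace ℝ (Fin k)) :=
        Metric.ball (0 : EuclideanSpace ℝ (Fin k)) R with hs
      have hFFind : FF = FF * s.indicator (fun _ => (1:ℝ≥0∞)) := by
        funext w
        by_cases hw : w ∈ s
        · simp [Set.indicator_of_mem hw]
        · have hzero : G (eL.symm (v, w)) = 0 := by
            by_contra hne
            exact hw (Metric.mem_ball.2 (by
              simpa [dist_eq_norm] using (hsupp (v, w) hne).2))
          simp [Set.indicator_of_notMem hw, hFF, hzero]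
      have hHold := ENNReal.lintegral_mul_le_Lp_mul_Lq (volume :
          Measure (EuclideanSpace ℝ (Fin k)))
        (Real.HolderConjugate.two_two)
        (f := FF) (g := s.indicator (fun _ => (1:ℝ≥0∞))) hmeasv.aemeasurable
        ((measurable_const.indicator Metric.isOpen_ball.measurableSet).aemeasurable)
      have hind2 : (∫⁻ w, (s.indicator (fun _ => (1:ℝ≥0∞)) w) ^ (2:ℝ)) = D := by
        have hptw : ∀ w : EuclideanSpace ℝ (Fin k),
            (s.indicator (fun _ => (1:ℝ≥0∞)) w) ^ (2:ℝ) =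
            s.indicator (fun _ => (1:ℝ≥0∞)) w := by
          intro w
          by_cases hw : w ∈ s
          · simp [Set.indicator_of_mem hw]
          · simp [Set.indicator_of_notMem hw, ENNReal.zero_rpow_of_pos]
        rw [lintegral_congr hptw, hs,
          lintegral_indicator (μ := volume) Metric.isOpen_ball.measurableSet]
        simp [hD, hs]
      calc (∫⁻ w, FF w) = ∫⁻ w, (FF * s.indicator (fun _ => (1:ℝ≥0∞))) w := by rw [← hFFind]
        _ ≤ (∫⁻ w, FF w ^ (2:ℝ)) ^ (1/2:ℝ) *
            (∫⁻ w, (s.indicator (fun _ => (1:ℝ≥0∞)) w) ^ (2:ℝ)) ^ (1/2:ℝ) := hHold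
        _ = (∫⁻ w, FF w ^ (2:ℝ)) ^ (1/2:ℝ) * D ^ (1/2:ℝ) := by rw [hind2]
    calc (‖h v‖₊ : ℝ≥0∞) = (Cv : ℝ≥0∞) * ‖∫ w, G (eL.symm (v, w))‖₊ := h0
      _ ≤ (Cv : ℝ≥0∞) * ((∫⁻ w, (‖G (eL.symm (v, w))‖₊ : ℝ≥0∞) ^ (2:ℝ)) ^ (1/2:ℝ) *
          D ^ (1/2:ℝ)) := mul_le_mul_right (le_trans h1 hCS) _
      _ = (Cv : ℝ≥0∞) * D ^ (1/2:ℝ) *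
          (∫⁻ w, (‖G (eL.symm (v, w))‖₊ : ℝ≥0∞) ^ (2:ℝ)) ^ (1/2:ℝ) := by ring
  -- L² bound for h
  have hsq : (∫⁻ v, (‖h v‖₊ : ℝ≥0∞) ^ (2:ℝ)) < ⊤ := by
    have hconst_ne : ((Cv : ℝ≥0∞) * D ^ (1/2:ℝ)) ^ (2:ℝ) ≠ ⊤ := by
      refine ENNReal.rpow_ne_top_of_nonneg (by norm_num) ?_
      exact ENNReal.mul_ne_top ENNReal.coe_ne_top
        (ENNReal.rpow_ne_top_of_nonneg (by norm_num) hDne)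
    have hb : ∀ v : EuclideanSpace ℝ (Fin m), (‖h v‖₊ : ℝ≥0∞) ^ (2:ℝ) ≤
        ((Cv : ℝ≥0∞) * D ^ (1/2:ℝ)) ^ (2:ℝ) *
          (∫⁻ w, (‖G (eL.symm (v, w))‖₊ : ℝ≥0∞) ^ (2:ℝ)) := by
      intro v
      have h1 := ENNReal.rpow_le_rpow (hpt v) (by norm_num : (0:ℝ) ≤ 2)
      refine le_trans h1 (le_of_eq ?_)
      rw [ENNReal.mul_rpow_of_nonneg _ _ (by norm_num : (0:ℝ) ≤ 2), ← ENNReal.rpow_mul]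
      norm_num
    calc (∫⁻ v, (‖h v‖₊ : ℝ≥0∞) ^ (2:ℝ))
        ≤ ∫⁻ v, ((Cv : ℝ≥0∞) * D ^ (1/2:ℝ)) ^ (2:ℝ) *
          (∫⁻ w, (‖G (eL.symm (v, w))‖₊ : ℝ≥0∞) ^ (2:ℝ)) := lintegral_mono hb
      _ = ((Cv : ℝ≥0∞) * D ^ (1/2:ℝ)) ^ (2:ℝ) *
          ∫⁻ v, ∫⁻ w, (‖G (eL.symm (v, w))‖₊ : ℝ≥0∞) ^ (2:ℝ) :=
          lintegral_const_mul' _ _ hconst_ne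
      _ = ((Cv : ℝ≥0∞) * D ^ (1/2:ℝ)) ^ (2:ℝ) *
          ∫⁻ p : EuclideanSpace ℝ (Fin m) × EuclideanSpace ℝ (Fin k),
            (‖G (eL.symm p)‖₊ : ℝ≥0∞) ^ (2:ℝ) := by
          congr 1
          rw [Measure.volume_eq_prod]
          exact (lintegral_prod _ ((hGsqm.comp hmsymm).aemeasurable)).symm
      _ < ⊤ := ENNReal.mul_lt_top (lt_top_iff_ne_top.2 hconst_ne)
          (lt_top_iff_ne_top.2 hX_fin)
  have hhmem : MemLp h 2 volume := by
    refine ⟨hhsm.aestronglyMeasurable, ?_⟩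
    rw [eLpNorm_eq_eLpNorm' (by norm_num) (by norm_num), eLpNorm']
    refine ENNReal.rpow_lt_top_of_nonneg (by norm_num) ?_
    simpa [enorm_eq_nnnorm] using hsq.ne
  exact ⟨0, R, h, hhmem, fun t => hmain t⟩
end

section
/- Let φ : ℝ^m → ℝ^n be the affine map φ(t) = At + b, where A is an n×m real matrix with ker A ≠ {0} and b ∈ ℝ^n. Then there exists a function f ∈ PW(ℝ^n) such that f ∘ φ does not belong to PW(ℝ^m). (Indeed, any f ∈ PW(ℝ^n) with f(b) ≠ 0 works, since f ∘ φ is constant equal to f(b) on the nontrivial subspace ker A and hence does not tend to 0 at infinity.) -/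
open MeasureTheory Complex
open scoped InnerProductSpace

open Filter Real in
/-- Riemann–Lebesgue: a PW function tends to `0` at infinity. -/
lemma PW.tendsto_cocompact {k : ℕ} {h : EuclideanSpace ℝ (Fin k) → ℂ} (hh : PW k h) :
    Filter.Tendsto h (Filter.cocompact _) (nhds 0) := by
  obtain ⟨c, r, g, hg, hrep⟩ := hh
  set F : EuclideanSpace ℝ (Fin k) → ℂ := (Metric.ball c r).indicator g with hF
  have twopi : (2 * π) ≠ 0 := by positivity
  have h1 : ∀ t, h t = ∫ v, Real.fourierChar (-⟪v, (-(2 * π)⁻¹) • t⟫_ℝ) • F v := by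
    intro t
    rw [hrep, ← integral_indicator measurableSet_ball]
    congr 1
    ext v
    by_cases hv : v ∈ Metric.ball c r
    · rw [Set.indicator_of_mem hv, hF, Set.indicator_of_mem hv, Circle.smul_def,
        Real.fourierChar_apply, real_inner_smul_right]
      have harg : 2 * π * -(-(2 * π)⁻¹ * ⟪v, t⟫_ℝ) = ⟪v, t⟫_ℝ := by field_simp
      rw [harg, smul_eq_mul, mul_comm (g v), mul_comm Complex.I]
    · rw [Set.indicator_of_notMem hv, hF, Set.indicator_of_notMem hv, smul_zero]
  have h2 : h = (fun w => ∫ v, Real.fourierChar (-⟪v, w⟫_ℝ) • F v) ∘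
      (fun t : EuclideanSpace ℝ (Fin k) => (-(2 * π)⁻¹) • t) := funext h1
  rw [h2]
  have hhomeo : Filter.Tendsto (fun t : EuclideanSpace ℝ (Fin k) => (-(2 * π)⁻¹) • t)
      (Filter.cocompact _) (Filter.cocompact _) :=
    (Homeomorph.smulOfNeZero (-(2 * π)⁻¹) (by simpa using twopi)).toCocompactMap.cocompact_tendsto'
  exact (tendsto_integral_exp_inner_smul_cocompact F).comp hhomeo

/-- If `φ t = A t + b` with `ker A ≠ {0}`, then some `f ∈ PW(ℝⁿ)` has `f ∘ φ ∉ PW(ℝᵐ)`;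
indeed any `f ∈ PW(ℝⁿ)` with `f b ≠ 0` works. -/
theorem exists_pw_not_preserved_of_nontrivial_kernel {m n : ℕ}
    (A : Matrix (Fin n) (Fin m) ℝ) (b : EuclideanSpace ℝ (Fin n))
    (hA : ∃ x : Fin m → ℝ, x ≠ 0 ∧ A.mulVec x = 0)
    (φ : EuclideanSpace ℝ (Fin m) → EuclideanSpace ℝ (Fin n))
    (hφ : ∀ t : EuclideanSpace ℝ (Fin m), ∀ i : Fin n,
      φ t i = A.mulVec (fun k => t k) i + b i) :
    (∃ f : EuclideanSpace ℝ (Fin n) → ℂ, PW n f ∧ ¬ PW m (f ∘ φ)) ∧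
    (∀ f : EuclideanSpace ℝ (Fin n) → ℂ, PW n f → f b ≠ 0 → ¬ PW m (f ∘ φ)) := by
  obtain ⟨x, hx0, hxker⟩ := hA
  -- the kernel vector as an element of Euclidean space
  set x' : EuclideanSpace ℝ (Fin m) := (EuclideanSpace.equiv (Fin m) ℝ).symm x with hx'
  have hx'0 : x' ≠ 0 := by
    intro hcon
    apply hx0
    funext k
    have := congrFun (congrArg (fun v : EuclideanSpace ℝ (Fin m) => (v : Fin m → ℝ)) hcon) k
    simpa [hx'] using this
  -- φ collapses the whole line ℝ • x' to the point b
  have hline : ∀ s : ℝ, φ (s • x') = b := by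
    intro s
    refine PiLp.ext fun i => ?_
    rw [hφ]
    have : (fun k => (s • x') k) = s • x := by
      funext k; simp [hx']
    rw [this, Matrix.mulVec_smul, hxker]
    simp
  -- the line tends to infinity
  have hlinf : Filter.Tendsto (fun s : ℝ => s • x') Filter.atTop
      (Filter.cocompact (EuclideanSpace ℝ (Fin m))) := by
    rw [← Metric.cobounded_eq_cocompact, ← tendsto_norm_atTop_iff_cobounded]
    have : (fun s : ℝ => ‖s • x'‖) = fun s : ℝ => |s| * ‖x'‖ := by
      funext s; rw [norm_smul, Real.norm_eq_abs]
    rw [this]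
    exact (Filter.tendsto_abs_atTop_atTop).atTop_mul_const (norm_pos_iff.2 hx'0)
  -- second part
  have main : ∀ f : EuclideanSpace ℝ (Fin n) → ℂ, PW n f → f b ≠ 0 → ¬ PW m (f ∘ φ) := by
    intro f _ hfb hPW
    have h0 : Filter.Tendsto (f ∘ φ) (Filter.cocompact _) (nhds 0) := hPW.tendsto_cocompact
    have h1 : Filter.Tendsto (fun s : ℝ => (f ∘ φ) (s • x')) Filter.atTop (nhds 0) :=
      h0.comp hlinf
    have h2 : (fun s : ℝ => (f ∘ φ) (s • x')) = fun _ => f b := by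
      funext s; simp [Function.comp, hline s]
    rw [h2] at h1
    exact hfb (tendsto_nhds_unique tendsto_const_nhds h1)
  refine ⟨?_, main⟩
  -- construct an explicit PW function nonvanishing at b
  set f : EuclideanSpace ℝ (Fin n) → ℂ := fun t =>
    ∫ u in Metric.ball (0 : EuclideanSpace ℝ (Fin n)) 1,
      Complex.exp (-(Complex.I * (⟪u, b⟫_ℝ : ℝ))) *
        Complex.exp (Complex.I * (⟪u, t⟫_ℝ : ℝ)) with hfdef
  have hball : MeasurableSet (Metric.ball (0 : EuclideanSpace ℝ (Fin n)) 1) :=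
    measurableSet_ball
  have hfin : IsFiniteMeasure (volume.restrict (Metric.ball (0 : EuclideanSpace ℝ (Fin n)) 1)) :=
    ⟨by rw [Measure.restrict_apply_univ]; exact measure_ball_lt_top⟩
  have hPWf : PW n f := by
    refine ⟨0, 1, (Metric.ball (0 : EuclideanSpace ℝ (Fin n)) 1).indicator
      (fun u => Complex.exp (-(Complex.I * (⟪u, b⟫_ℝ : ℝ)))), ?_, ?_⟩
    · rw [memLp_indicator_iff_restrict hball]
      refine MemLp.of_bound ?_ 1 ?_
      · refine Continuous.aestronglyMeasurable ?_
        exact Complex.continuous_exp.comp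
          ((continuous_const.mul (Complex.continuous_ofReal.comp
            (continuous_id.inner continuous_const))).neg)
      · refine Filter.Eventually.of_forall fun u => ?_
        simp [Complex.norm_exp]
    · intro t
      rw [hfdef]
      refine (setIntegral_congr_fun hball fun u hu => ?_)
      rw [Set.indicator_of_mem hu]
  have hfb : f b ≠ 0 := by
    have : f b = ((volume (Metric.ball (0 : EuclideanSpace ℝ (Fin n)) 1)).toReal : ℂ) := by
      rw [hfdef]
      have : ∀ u : EuclideanSpace ℝ (Fin n),
          Complex.exp (-(Complex.I * (⟪u, b⟫_ℝ : ℝ))) *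
            Complex.exp (Complex.I * (⟪u, b⟫_ℝ : ℝ)) = 1 := by
        intro u
        rw [← Complex.exp_add]
        simp
      simp only [this]
      simp [Measure.restrict_apply_univ]
      rfl
    rw [this]
    have h1 : volume (Metric.ball (0 : EuclideanSpace ℝ (Fin n)) 1) ≠ 0 :=
      (Metric.measure_ball_pos _ _ one_pos).ne'
    have h2 : volume (Metric.ball (0 : EuclideanSpace ℝ (Fin n)) 1) ≠ ⊤ :=
      measure_ball_lt_top.ne
    simpa using ENNReal.toReal_ne_zero.2 ⟨h1, h2⟩
  exact ⟨f, hPWf, main f hPWf hfb⟩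
end

section
/- Let n > m, and let S : ℝ^m → ℝ^n be the coordinate inclusion S(x₁, …, x_m) = (x₁, …, x_m, 0, …, 0). Then for every function f ∈ PW(ℝ^n), the superposition f ∘ S belongs to PW(ℝ^m). -/
open MeasureTheory Complex
open scoped InnerProductSpace
open scoped ENNReal

private lemma sum_castLE_le {m n : ℕ} (hmn : m ≤ n) (G : Fin n → ℝ) (hG : ∀ j, 0 ≤ G j) :
    ∑ i : Fin m, G (Fin.castLE hmn i) ≤ ∑ j : Fin n, G j := by
  rw [show ∑ i : Fin m, G (Fin.castLE hmn i)
      = ∑ j ∈ Finset.univ.map ⟨Fin.castLE hmn, Fin.castLE_injective hmn⟩, G j by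
    rw [Finset.sum_map]; rfl]
  exact Finset.sum_le_sum_of_subset_of_nonneg (Finset.subset_univ _) fun j _ _ => hG j

private lemma sum_dite_fin {m n : ℕ} (hmn : m ≤ n) (F : Fin m → ℝ) :
    (∑ j : Fin n, if h : (j : ℕ) < m then F ⟨j, h⟩ else 0) = ∑ i : Fin m, F i := by
  refine ((Finset.sum_subset (Finset.subset_univ
      (Finset.univ.map ⟨Fin.castLE hmn, Fin.castLE_injective hmn⟩)) ?_).symm).trans ?_
  · intro j _ hj
    rw [dif_neg]
    intro h
    exact hj (Finset.mem_map.2 ⟨⟨j, h⟩, Finset.mem_univ _, Fin.ext rfl⟩)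
  · rw [Finset.sum_map]
    exact Finset.sum_congr rfl fun i _ => by simp

private lemma lintegral_sq_bound {α : Type} [MeasurableSpace α] (μ : Measure α)
    (F : α → ℝ≥0∞) (hF : AEMeasurable F μ) :
    (∫⁻ a, F a ∂μ) ^ (2 : ℕ) ≤ (∫⁻ a, (F a) ^ (2 : ℕ) ∂μ) * μ Set.univ := by
  have hconj : Real.HolderConjugate 2 2 := Real.HolderConjugate.two_two
  have H := ENNReal.lintegral_mul_le_Lp_mul_Lq μ hconj hF
    (aemeasurable_const (b := (1 : ℝ≥0∞)))
  simp only [Pi.mul_apply, mul_one, ENNReal.one_rpow, lintegral_const, one_mul,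
    ENNReal.rpow_two] at H
  have H2 := ENNReal.rpow_le_rpow H (by norm_num : (0:ℝ) ≤ 2)
  rw [ENNReal.mul_rpow_of_nonneg _ _ (by norm_num : (0:ℝ) ≤ 2), ← ENNReal.rpow_natCast _ 2,
    ← ENNReal.rpow_mul, ← ENNReal.rpow_mul] at H2
  norm_num at H2
  exact H2

/-- For `n > m`, composing a function of `PW(ℝⁿ)` with the coordinate inclusion
`S (x₁, …, xₘ) = (x₁, …, xₘ, 0, …, 0)` yields a function of `PW(ℝᵐ)`. -/
theorem pw_comp_coord_inclusion {m n : ℕ} (hmn : m < n)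
    (S : EuclideanSpace ℝ (Fin m) → EuclideanSpace ℝ (Fin n))
    (hS : ∀ (x : EuclideanSpace ℝ (Fin m)) (j : Fin n),
      S x j = if h : (j : ℕ) < m then x ⟨j, h⟩ else 0)
    (f : EuclideanSpace ℝ (Fin n) → ℂ) (hf : PW n f) :
    PW m (f ∘ S) := by
  obtain ⟨c, r, g0, hg0, hf0⟩ := hf
  -- replace `g0` by a strongly measurable representative `g`
  obtain ⟨g, hg_sm, hgg⟩ : ∃ g : EuclideanSpace ℝ (Fin n) → ℂ,
      StronglyMeasurable g ∧ g0 =ᵐ[volume] g :=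
    ⟨hg0.1.mk g0, hg0.1.stronglyMeasurable_mk, hg0.1.ae_eq_mk⟩
  have hg : MemLp g 2 volume := hg0.ae_eq hgg
  have hf : ∀ t, f t = ∫ u in Metric.ball c r,
      g u * Complex.exp (Complex.I * (⟪u, t⟫_ℝ : ℝ)) := by
    intro t
    rw [hf0 t]
    refine integral_congr_ae (ae_restrict_of_ae (hgg.mono fun u hu => ?_))
    simp only [hu]
  clear hf0 hgg hg0
  rcases le_or_gt r 0 with hr | hr
  · -- degenerate case : the ball is empty and `f = 0`
    refine ⟨0, 0, 0, MemLp.zero, fun x => ?_⟩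
    simp [Function.comp, hf (S x), Metric.ball_eq_empty.2 hr, Metric.ball_eq_empty.2 le_rfl]
  -- main case
  -- the measurable equivalence `ℝᵐ × ℝ^(rest) ≃ ℝⁿ`
  set ι₂ : Type := {j : Fin n // ¬ (j : ℕ) < m} with hι₂
  set Φ : (EuclideanSpace ℝ (Fin m) × (ι₂ → ℝ)) ≃ᵐ EuclideanSpace ℝ (Fin n) :=
    ((((MeasurableEquiv.toLp 2 (Fin m → ℝ)).symm).prodCongr (MeasurableEquiv.refl (ι₂ → ℝ))).trans
      (((MeasurableEquiv.piCongrLeft (fun _ : Fin m => ℝ)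
          { toFun := fun j : {j : Fin n // (j : ℕ) < m} => (⟨(j : Fin n), j.2⟩ : Fin m)
            invFun := fun i : Fin m => ⟨⟨(i : ℕ), i.2.trans hmn⟩, i.2⟩
            left_inv := fun j => Subtype.ext (Fin.ext rfl)
            right_inv := fun i => Fin.ext rfl }).symm.prodCongr
            (MeasurableEquiv.refl (ι₂ → ℝ))).trans
        (MeasurableEquiv.piEquivPiSubtypeProd (fun _ : Fin n => ℝ)
          (fun j : Fin n => (j : ℕ) < m)).symm)).trans
      ((MeasurableEquiv.toLp 2 (Fin n → ℝ)).symm).symm with hΦdef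
  have hΦvol : MeasurePreserving Φ volume volume := by
    rw [hΦdef]
    simp only [MeasurableEquiv.coe_trans]
    refine MeasurePreserving.comp (MeasurePreserving.symm _
      (EuclideanSpace.volume_preserving_symm_measurableEquiv_toLp (Fin n))) ?_
    refine MeasurePreserving.comp (μb := volume) ?_ ?_
    · refine MeasurePreserving.comp (MeasurePreserving.symm _
        (volume_preserving_piEquivPiSubtypeProd (fun _ : Fin n => ℝ)
          (fun j : Fin n => (j : ℕ) < m))) ?_
      rw [Measure.volume_eq_prod, Measure.volume_eq_prod]
      exact (MeasurePreserving.symm _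
        (volume_measurePreserving_piCongrLeft (fun _ : Fin m => ℝ) _)).prod
        (MeasurePreserving.id _)
    · rw [Measure.volume_eq_prod, Measure.volume_eq_prod]
      exact (EuclideanSpace.volume_preserving_symm_measurableEquiv_toLp (Fin m)).prod
        (MeasurePreserving.id _)
  have hΦapp : ∀ (v : EuclideanSpace ℝ (Fin m)) (w : ι₂ → ℝ) (j : Fin n),
      Φ (v, w) j = if h : (j : ℕ) < m then v ⟨j, h⟩ else w ⟨j, h⟩ := by
    intro v w j
    rfl
  clear hΦdef hι₂
  set B := Metric.ball c r with hBdef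
  haveI : IsFiniteMeasure (volume.restrict B) :=
    ⟨by rw [Measure.restrict_apply_univ]; exact measure_ball_lt_top⟩
  set gB : EuclideanSpace ℝ (Fin n) → ℂ := B.indicator g with hgBdef
  have hgB_sm : StronglyMeasurable gB := hg_sm.indicator measurableSet_ball
  have hgB2 : MemLp gB 2 volume := hg.indicator measurableSet_ball
  have hgB_int : Integrable gB volume := by
    rw [hgBdef, integrable_indicator_iff measurableSet_ball]
    exact (hg.restrict B).integrable one_le_two
  set h : EuclideanSpace ℝ (Fin m) × (ι₂ → ℝ) → ℂ := fun q => gB (Φ q) with hhdef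
  have hh_sm : StronglyMeasurable h := hgB_sm.comp_measurable Φ.measurable
  have hh2 : MemLp h 2 volume := hgB2.comp_measurePreserving hΦvol
  have hh_int : Integrable h volume :=
    (hΦvol.integrable_comp_emb Φ.measurableEmbedding).2 hgB_int
  set G : EuclideanSpace ℝ (Fin m) → ℂ := fun v => ∫ w, h (v, w) with hGdef
  have hG_sm : StronglyMeasurable G := hh_sm.integral_prod_right'
  set c₁ : EuclideanSpace ℝ (Fin m) := WithLp.toLp 2 fun i => c (Fin.castLE hmn.le i) with hc₁def
  -- distance estimates
  have hcoord : ∀ (x y : EuclideanSpace ℝ (Fin n)) (j : Fin n), dist (x j) (y j) ≤ dist x y := by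
    intro x y j
    rw [EuclideanSpace.dist_eq, ← Real.sqrt_sq (dist_nonneg (x := x j) (y := y j))]
    exact Real.sqrt_le_sqrt
      (Finset.single_le_sum (f := fun i => dist (x i) (y i) ^ 2)
        (fun i _ => sq_nonneg _) (Finset.mem_univ j))
  have hdist : ∀ (v : EuclideanSpace ℝ (Fin m)) (w : ι₂ → ℝ),
      dist v c₁ ≤ dist (Φ (v, w)) c := by
    intro v w
    rw [EuclideanSpace.dist_eq, EuclideanSpace.dist_eq]
    refine Real.sqrt_le_sqrt (le_trans (le_of_eq (Finset.sum_congr rfl fun i _ => ?_))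
      (sum_castLE_le hmn.le (fun j => dist (Φ (v, w) j) (c j) ^ 2) fun j => sq_nonneg _))
    have h1 : Φ (v, w) (Fin.castLE hmn.le i) = v i := by
      rw [hΦapp, dif_pos (show ((Fin.castLE hmn.le i : Fin n) : ℕ) < m from i.2)]
      exact congrArg v (Fin.ext rfl)
    simp only [h1, hc₁def]
  -- the inner product identity
  have hinner : ∀ (v : EuclideanSpace ℝ (Fin m)) (w : ι₂ → ℝ) (x : EuclideanSpace ℝ (Fin m)),
      ⟪Φ (v, w), S x⟫_ℝ = ⟪v, x⟫_ℝ := by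
    intro v w x
    simp only [PiLp.inner_apply, RCLike.inner_apply, conj_trivial]
    rw [← sum_dite_fin hmn.le (fun i => x i * v i)]
    refine Finset.sum_congr rfl fun j _ => ?_
    rw [hΦapp, hS]
    by_cases hj : (j : ℕ) < m
    · rw [dif_pos hj, dif_pos hj, dif_pos hj]
    · rw [dif_neg hj, dif_neg hj, dif_neg hj, zero_mul]
  -- `h (v, w)` vanishes unless `v` lies in the ball around `c₁`
  have hvanish : ∀ (v : EuclideanSpace ℝ (Fin m)) (w : ι₂ → ℝ),
      v ∉ Metric.ball c₁ r → h (v, w) = 0 := by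
    intro v w hv
    have hnot : Φ (v, w) ∉ B := by
      rw [hBdef, Metric.mem_ball]
      intro hc
      exact hv (Metric.mem_ball.2 (lt_of_le_of_lt (hdist v w) hc))
    simp [hhdef, hgBdef, Set.indicator_of_notMem hnot]
  have hGvanish : ∀ v, v ∉ Metric.ball c₁ r → G v = 0 := by
    intro v hv
    have h0 : ∀ w, h (v, w) = 0 := fun w => hvanish v w hv
    simp only [hGdef, h0, integral_zero]
  -- the section set `T`
  set T : Set (ι₂ → ℝ) := Set.univ.pi (fun j : ι₂ => Metric.ball (c j.1) r) with hTdef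
  have hTmeas : MeasurableSet T := MeasurableSet.univ_pi fun j => measurableSet_ball
  have hTvol : volume T < ∞ := by
    rw [hTdef, volume_pi_pi]
    exact ENNReal.prod_lt_top fun j _ => measure_ball_lt_top
  have hsupp : ∀ (v : EuclideanSpace ℝ (Fin m)) (w : ι₂ → ℝ), w ∉ T → h (v, w) = 0 := by
    intro v w hw
    obtain ⟨j, hj⟩ : ∃ j : ι₂, w j ∉ Metric.ball (c j.1) r := by
      by_contra hcon
      push_neg at hcon
      exact hw (Set.mem_univ_pi.2 hcon)
    have hnot : Φ (v, w) ∉ B := by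
      rw [hBdef, Metric.mem_ball]
      intro hc
      refine hj (Metric.mem_ball.2 ?_)
      have e1 : Φ (v, w) j.1 = w j := by
        rw [hΦapp, dif_neg j.2]
      calc dist (w j) (c j.1) = dist (Φ (v, w) j.1) (c j.1) := by rw [e1]
        _ ≤ dist (Φ (v, w)) c := hcoord _ _ _
        _ < r := hc
    simp [hhdef, hgBdef, Set.indicator_of_notMem hnot]
  -- `G` is square integrable
  have hG2 : MemLp G 2 volume := by
    refine ⟨hG_sm.aestronglyMeasurable, ?_⟩
    rw [eLpNorm_eq_lintegral_rpow_enorm_toReal two_ne_zero ENNReal.ofNat_ne_top]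
    refine ENNReal.rpow_lt_top_of_nonneg (by norm_num) (ne_of_lt ?_)
    simp only [ENNReal.toReal_ofNat, ENNReal.rpow_two]
    have hprod : (∫⁻ q, (‖h q‖₊ : ℝ≥0∞) ^ (2:ℕ)
        ∂(volume : Measure (EuclideanSpace ℝ (Fin m) × (ι₂ → ℝ)))) < ∞ := by
      have h2 := hh2.2
      rw [eLpNorm_eq_lintegral_rpow_enorm_toReal two_ne_zero ENNReal.ofNat_ne_top] at h2
      simp only [ENNReal.toReal_ofNat, ENNReal.rpow_two] at h2
      exact (ENNReal.rpow_lt_top_iff_of_pos (by norm_num : (0:ℝ) < 1/2)).1 h2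
    have hiter : ∫⁻ v, ∫⁻ w, (‖h (v, w)‖₊ : ℝ≥0∞) ^ (2:ℕ)
        = ∫⁻ q, (‖h q‖₊ : ℝ≥0∞) ^ (2:ℕ)
          ∂(volume : Measure (EuclideanSpace ℝ (Fin m) × (ι₂ → ℝ))) := by
      rw [Measure.volume_eq_prod, lintegral_prod _ (hh_sm.measurable.nnnorm.coe_nnreal_ennreal.pow_const 2).aemeasurable]
    have hkey : ∀ v : EuclideanSpace ℝ (Fin m),
        (‖G v‖₊ : ℝ≥0∞) ^ (2:ℕ) ≤ volume T * ∫⁻ w, (‖h (v, w)‖₊ : ℝ≥0∞) ^ (2:ℕ) := by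
      intro v
      have hb1 : (‖G v‖₊ : ℝ≥0∞) ≤ ∫⁻ w in T, (‖h (v, w)‖₊ : ℝ≥0∞) := by
        have := enorm_integral_le_lintegral_enorm
          (μ := (volume : Measure (ι₂ → ℝ))) (fun w => h (v, w))
        rw [hGdef]
        refine le_trans this (le_of_eq ?_)
        rw [← lintegral_indicator hTmeas]
        refine lintegral_congr fun w => ?_
        by_cases hw : w ∈ T
        · rw [Set.indicator_of_mem hw, enorm_eq_nnnorm]
        · rw [Set.indicator_of_notMem hw, hsupp v w hw]
          simp
      have hmeas : AEMeasurable (fun w => (‖h (v, w)‖₊ : ℝ≥0∞)) (volume.restrict T) :=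
        ((hh_sm.comp_measurable measurable_prodMk_left).measurable.nnnorm.coe_nnreal_ennreal).aemeasurable
      calc (‖G v‖₊ : ℝ≥0∞) ^ (2:ℕ)
          ≤ (∫⁻ w in T, (‖h (v, w)‖₊ : ℝ≥0∞)) ^ (2:ℕ) :=
            pow_le_pow_left₀ zero_le hb1 2
        _ ≤ (∫⁻ w in T, (‖h (v, w)‖₊ : ℝ≥0∞) ^ (2:ℕ)) * (volume.restrict T) Set.univ :=
            lintegral_sq_bound _ _ hmeas
        _ ≤ (∫⁻ w, (‖h (v, w)‖₊ : ℝ≥0∞) ^ (2:ℕ)) * volume T := by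
            rw [Measure.restrict_apply_univ]
            exact mul_le_mul_left (setLIntegral_le_lintegral _ _) _
        _ = volume T * ∫⁻ w, (‖h (v, w)‖₊ : ℝ≥0∞) ^ (2:ℕ) := mul_comm _ _
    calc ∫⁻ v, (‖G v‖₊ : ℝ≥0∞) ^ (2:ℕ)
        ≤ ∫⁻ v, volume T * ∫⁻ w, (‖h (v, w)‖₊ : ℝ≥0∞) ^ (2:ℕ) := lintegral_mono hkey
      _ = volume T * ∫⁻ v, ∫⁻ w, (‖h (v, w)‖₊ : ℝ≥0∞) ^ (2:ℕ) :=
          lintegral_const_mul' _ _ hTvol.ne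
      _ < ∞ := by
          rw [hiter]
          exact ENNReal.mul_lt_top hTvol hprod
  -- conclusion
  refine ⟨c₁, r, G, hG2, fun x => ?_⟩
  have hexp_cont : Continuous fun q : EuclideanSpace ℝ (Fin m) × (ι₂ → ℝ) =>
      Complex.exp (Complex.I * (⟪q.1, x⟫_ℝ : ℝ)) :=
    Complex.continuous_exp.comp (continuous_const.mul
      (Complex.continuous_ofReal.comp (continuous_fst.inner continuous_const)))
  have hexp_norm : ∀ t : ℝ, ‖Complex.exp (Complex.I * (t : ℂ))‖ = 1 := by
    intro t
    rw [Complex.norm_exp]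
    simp
  have hxint : Integrable (fun q : EuclideanSpace ℝ (Fin m) × (ι₂ → ℝ) =>
      h q * Complex.exp (Complex.I * (⟪q.1, x⟫_ℝ : ℝ))) volume := by
    refine Integrable.mono' hh_int.norm
      (hh_sm.aestronglyMeasurable.mul hexp_cont.aestronglyMeasurable)
      (Filter.Eventually.of_forall fun q => ?_)
    rw [norm_mul, hexp_norm, mul_one]
  calc (f ∘ S) x
      = ∫ u in B, g u * Complex.exp (Complex.I * (⟪u, S x⟫_ℝ : ℝ)) := hf (S x)
    _ = ∫ u, gB u * Complex.exp (Complex.I * (⟪u, S x⟫_ℝ : ℝ)) := by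
        rw [← integral_indicator measurableSet_ball]
        refine integral_congr_ae (Filter.Eventually.of_forall fun u => ?_)
        rw [hgBdef, hBdef]
        exact Set.indicator_mul_left _ _ _
    _ = ∫ q : EuclideanSpace ℝ (Fin m) × (ι₂ → ℝ),
          h q * Complex.exp (Complex.I * (⟪q.1, x⟫_ℝ : ℝ)) := by
        rw [← hΦvol.integral_comp Φ.measurableEmbedding]
        refine integral_congr_ae (Filter.Eventually.of_forall fun q => ?_)
        obtain ⟨v, w⟩ := q
        simp only [hinner v w x, hhdef]
    _ = ∫ v, (∫ w, h (v, w) * Complex.exp (Complex.I * (⟪v, x⟫_ℝ : ℝ))) := by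
        rw [Measure.volume_eq_prod] at hxint ⊢
        exact integral_prod _ hxint
    _ = ∫ v, G v * Complex.exp (Complex.I * (⟪v, x⟫_ℝ : ℝ)) := by
        simp only [hGdef, integral_mul_const]
    _ = ∫ v in Metric.ball c₁ r, G v * Complex.exp (Complex.I * (⟪v, x⟫_ℝ : ℝ)) :=
        (setIntegral_eq_integral_of_forall_compl_eq_zero fun v hv => by
          rw [hGvanish v hv, zero_mul]).symm
end
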